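/- arXiv:1508.00118 — 5 statements merged into one kernel-verified Lean document; each statement's English description precedes it below -/
import Mathlib

section
/- Let A be an algebra over a field F of characteristic zero, graded by a finite integral domain B, with the 0-component A_0 anticommutative in the sense that xy = -yx for all x,y in A_0. Let H be a nonzero subalgebra of A_0 such that A decomposes as the direct sum of simultaneous eigenspaces A^α = {x ∈ A : hx = α(h)x for all h ∈ H} over α ∈ H*. Then H is abelian: hh' = 0 for all h, h' ∈ H. -/
/-- The simultaneous eigenspace (root space) `A^α = {x : A | h·x = α(h)·x for all h ∈ H}`
attached to a linear functional `α` on a subspace `H` of `A`. -/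
def rootSpace {F A : Type*} [Field F] [NonUnitalNonAssocRing A] [Module F A]
    [SMulCommClass F A A] [IsScalarTower F A A]
    (H : Submodule F A) (α : Module.Dual F H) : Submodule F A where
  carrier := {x : A | ∀ h : H, (h : A) * x = α h • x}
  add_mem' := by
    intro a b ha hb h
    rw [mul_add, ha h, hb h, smul_add]
  zero_mem' := by
    intro h
    simp
  smul_mem' := by
    intro c x hx h
    rw [mul_smul_comm, hx h, smul_comm]

/-!
Anticommutativity of `A₀` in characteristic zero gives `h * h = 0` for `h ∈ H`. Left
multiplication by `h` scales the `α`-component of the root space decomposition by `α(h)`, so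
componentwise `h * h = 0` says `α(h) • hα = 0`, and `h * h' = -(h' * h)` says
`α(h) • h'α = -(α(h') • hα)`. When `α(h) ≠ 0` the first forces `hα = 0`, so the right side of
the second vanishes: every component `α(h) • h'α` of `h * h'` is zero.
-/

theorem DirectSum.IsInternal.ofBijective_coeLinearMap_symm_map_of_smul {R M ι : Type*}
    [Semiring R] [AddCommMonoid M] [Module R M] [DecidableEq ι] {p : ι → Submodule R M}
    (hp : DirectSum.IsInternal p) {f : M →ₗ[R] M} {c : ι → R}
    (hf : ∀ i, ∀ x ∈ p i, f x = c i • x) (x : M) (i : ι) :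
    ((LinearEquiv.ofBijective (DirectSum.coeLinearMap p) hp).symm (f x) i : M) =
      c i • ((LinearEquiv.ofBijective (DirectSum.coeLinearMap p) hp).symm x i : M) := by
  set e := LinearEquiv.ofBijective (DirectSum.coeLinearMap p) hp
  have hx : x ∈ ⨆ j, p j := hp.submodule_iSup_eq_top ▸ Submodule.mem_top
  refine Submodule.iSup_induction p (motive := fun x => (e.symm (f x) i : M) = c i • e.symm x i)
    hx (fun j y hy => ?_) (by simp) (fun y z hy hz => by simp [hy, hz, smul_add])
  rw [hf j y hy]
  obtain rfl | hji := eq_or_ne j i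
  · rw [hp.ofBijective_coeLinearMap_of_mem (Submodule.smul_mem _ _ hy),
      hp.ofBijective_coeLinearMap_of_mem hy]
  · rw [hp.ofBijective_coeLinearMap_of_mem_ne hji (Submodule.smul_mem _ _ hy),
      hp.ofBijective_coeLinearMap_of_mem_ne hji hy, Submodule.coe_zero, smul_zero]

section RootSpaceDecomposition

variable {F A : Type*} [Field F] [NonUnitalNonAssocRing A] [Module F A] [SMulCommClass F A A]
  [IsScalarTower F A A] {H : Submodule F A} [DecidableEq (Module.Dual F H)]
  (hdecomp : DirectSum.IsInternal (fun α : Module.Dual F H => rootSpace H α))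

include hdecomp in
theorem rootSpace_component_mul (a : H) (x : A) (α : Module.Dual F H) :
    ((LinearEquiv.ofBijective (DirectSum.coeLinearMap _) hdecomp).symm (a * x) α : A) =
      α a • ((LinearEquiv.ofBijective (DirectSum.coeLinearMap _) hdecomp).symm x α : A) :=
  hdecomp.ofBijective_coeLinearMap_symm_map_of_smul (f := LinearMap.mulLeft F (a : A))
    (fun _ _ hy => hy a) x α

include hdecomp in
theorem mul_eq_zero_of_mul_self_eq_zero_of_anticomm {h h' : A} (hh : h ∈ H) (hh' : h' ∈ H)
    (hsq : h * h = 0) (hanti : h * h' = -(h' * h)) : h * h' = 0 := by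
  set e := LinearEquiv.ofBijective (DirectSum.coeLinearMap _) hdecomp
  have hcomp := rootSpace_component_mul hdecomp
  suffices hcomp_zero : ∀ α, (e.symm (h * h') α : A) = 0 by
    apply e.symm.injective
    ext α : 1
    simpa using hcomp_zero α
  intro α
  have hsq_comp : α ⟨h, hh⟩ • (e.symm h α : A) = 0 := by
    rw [← hcomp ⟨h, hh⟩, hsq, map_zero]
    rfl
  have hanti_comp : α ⟨h, hh⟩ • (e.symm h' α : A) = -(α ⟨h', hh'⟩ • (e.symm h α : A)) := by
    rw [← hcomp ⟨h, hh⟩, ← hcomp ⟨h', hh'⟩, hanti, map_neg]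
    rfl
  rw [hcomp ⟨h, hh⟩]
  obtain hα | hα := eq_or_ne (α ⟨h, hh⟩) 0
  · rw [hα, zero_smul]
  · rw [hanti_comp, (smul_eq_zero_iff_right hα).mp hsq_comp, smul_zero, neg_zero]

end RootSpaceDecomposition

theorem toral_subalgebra_abelian_general {F A B : Type*} [Field F] [CharZero F]
    [NonUnitalNonAssocRing A] [Module F A] [SMulCommClass F A A] [IsScalarTower F A A]
    [CommRing B]
    (𝒜 : B → Submodule F A)
    (hanti0 : ∀ x ∈ 𝒜 0, ∀ y ∈ 𝒜 0, x * y = -(y * x))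
    (H : Submodule F A) [DecidableEq (Module.Dual F H)] (hH0 : H ≤ 𝒜 0)
    (hdecomp : DirectSum.IsInternal (fun α : Module.Dual F H => rootSpace H α)) :
    ∀ h ∈ H, ∀ h' ∈ H, h * h' = 0 := by
  intro h hh h' hh'
  have : IsAddTorsionFree A := .of_isTorsionFree F A
  have hsq : h * h = 0 := self_eq_neg.mp (hanti0 h (hH0 hh) h (hH0 hh))
  exact mul_eq_zero_of_mul_self_eq_zero_of_anticomm hdecomp hh hh' hsq
    (hanti0 h (hH0 hh) h' (hH0 hh'))

/-- Let `A` be an algebra over a field of characteristic zero graded by a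
finite integral domain `B`, with anticommutative `0`-component, and let `H` be a nonzero
subalgebra of `A₀` such that `A` is the direct sum of the simultaneous eigenspaces `A^α`,
`α ∈ H*`.  Then `H` is abelian: all products of elements of `H` vanish. -/
theorem toral_subalgebra_abelian {F A B : Type*} [Field F] [CharZero F]
    [NonUnitalNonAssocRing A] [Module F A] [SMulCommClass F A A] [IsScalarTower F A A]
    [CommRing B] [IsDomain B] [Fintype B] [DecidableEq B]
    (𝒜 : B → Submodule F A) (hgrade : DirectSum.IsInternal 𝒜)
    (hgmul : ∀ (b b' : B) (x y : A), x ∈ 𝒜 b → y ∈ 𝒜 b' → x * y ∈ 𝒜 (b + b'))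
    (hanti0 : ∀ x ∈ 𝒜 0, ∀ y ∈ 𝒜 0, x * y = -(y * x))
    (H : Submodule F A) [DecidableEq (Module.Dual F H)] (hH0 : H ≤ 𝒜 0) (hHne : H ≠ ⊥)
    (hHmul : ∀ x ∈ H, ∀ y ∈ H, x * y ∈ H)
    (hdecomp : DirectSum.IsInternal (fun α : Module.Dual F H => rootSpace H α)) :
    ∀ h ∈ H, ∀ h' ∈ H, h * h' = 0 :=
  toral_subalgebra_abelian_general 𝒜 hanti0 H hH0 hdecomp
end

section
/- Let (A, H) be a toral pair where A satisfies xy = -yx and J(x,y,xy) = 0 (an 'extended algebra' in the sense of Sagle). Then for distinct α, β ∈ H*, the root spaces satisfy A^α A^β ⊆ A^{α+β}. -/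
/-- The Jacobian. -/
def jac {A : Type*} [NonUnitalNonAssocRing A] (x y z : A) : A :=
  (x * y) * z + (z * x) * y + (y * z) * x

/-!
Polarizing the identity `J(x, y, xy) = 0` in both variables and substituting a toral element `h`
(with `h h = 0`) for the new variable gives, for `h x = a x` and `h y = b y`,
`(b - a) • h(xy) = (b - a)(b + a) • xy`. So `xy` has eigenvalue `α(h) + β(h)` under every `h`
outside the hyperplane `α = β` of `H`, and a linear map vanishing off a proper hyperplane vanishes.
-/

section Polarization

variable {A : Type*} [NonUnitalNonAssocRing A] (hsagle : ∀ x y : A, jac x y (x * y) = 0)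
include hsagle

theorem jac_polarization (p q r : A) : jac p q (r * q) + jac r q (p * q) = 0 := by
  have e : jac (p + r) q ((p + r) * q)
      = jac p q (p * q) + (jac p q (r * q) + jac r q (p * q)) + jac r q (r * q) := by
    simp only [jac, add_mul, mul_add]; abel
  rw [hsagle, hsagle, hsagle] at e
  simpa using e.symm

theorem jac_double_polarization (p q r : A) :
    jac p q (r * r) + jac p r (r * q) + jac r q (p * r) + jac r r (p * q) = 0 := by
  have e : jac p (q + r) (r * (q + r)) + jac r (q + r) (p * (q + r))
      = (jac p q (r * q) + jac r q (p * q)) + (jac p r (r * r) + jac r r (p * r))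
        + (jac p q (r * r) + jac p r (r * q) + jac r q (p * r) + jac r r (p * q)) := by
    simp only [jac, mul_add, add_mul]; abel
  rw [jac_polarization hsagle, jac_polarization hsagle, jac_polarization hsagle] at e
  simpa using e.symm

end Polarization

section Eigenvalues

variable {A : Type*} [NonUnitalNonAssocRing A]
  (hanti : ∀ x y : A, x * y = -(y * x)) (hsagle : ∀ x y : A, jac x y (x * y) = 0)
include hanti hsagle

theorem sub_smul_mul_mul_eq {R : Type*} [CommRing R] [Module R A] [SMulCommClass R A A]
    [IsScalarTower R A A] {h x y : A} {a b : R} (hh : h * h = 0)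
    (hx : h * x = a • x) (hy : h * y = b • y) :
    (b - a) • (h * (x * y)) = ((b - a) * (b + a)) • (x * y) := by
  have E := jac_double_polarization hsagle x y h
  have mul_h : ∀ p : A, p * h = -(h * p) := fun p => hanti p h
  simp only [jac, hh, mul_h, hx, hy, hanti y x, mul_zero, zero_mul, neg_mul, mul_neg, neg_neg,
    smul_mul_assoc, mul_smul_comm, smul_smul, smul_neg, zero_add, add_zero] at E
  linear_combination (norm := module) E

theorem mul_mul_eq_add_smul_of_ne {F : Type*} [Field F] [Module F A] [SMulCommClass F A A]
    [IsScalarTower F A A] {h x y : A} {a b : F} (hh : h * h = 0)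
    (hx : h * x = a • x) (hy : h * y = b • y) (hab : a ≠ b) :
    h * (x * y) = (a + b) • (x * y) := by
  have hba : b - a ≠ 0 := sub_ne_zero.mpr hab.symm
  calc h * (x * y) = (b - a)⁻¹ • ((b - a) • (h * (x * y))) := by
        rw [inv_smul_smul₀ hba]
    _ = (a + b) • (x * y) := by
        rw [sub_smul_mul_mul_eq hanti hsagle hh hx hy, mul_smul, inv_smul_smul₀ hba, add_comm]

end Eigenvalues

theorem LinearMap.eq_zero_of_forall_apply_ne_zero {R V W : Type*} [Ring R] [AddCommGroup V]
    [Module R V] [AddCommGroup W] [Module R W] {f : V →ₗ[R] W} {γ : Module.Dual R V}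
    (hγ : γ ≠ 0) (hf : ∀ v, γ v ≠ 0 → f v = 0) : f = 0 := by
  obtain ⟨v₀, hv₀⟩ : ∃ v₀, γ v₀ ≠ 0 := by
    by_contra! h
    exact hγ (LinearMap.ext h)
  ext v
  by_cases hv : γ v = 0
  · have hsum : γ (v + v₀) ≠ 0 := by rwa [map_add, hv, zero_add]
    simpa [hf v₀ hv₀] using hf (v + v₀) hsum
  · exact hf v hv

theorem rootSpace_mul_of_ne_general {F A : Type*} [Field F]
    [NonUnitalNonAssocRing A] [Module F A] [SMulCommClass F A A] [IsScalarTower F A A]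
    (hanti : ∀ x y : A, x * y = -(y * x))
    (hsagle : ∀ x y : A, jac x y (x * y) = 0)
    (H : Submodule F A)
    (hHab : ∀ h ∈ H, ∀ h' ∈ H, h * h' = 0)
    :
    ∀ (α β : Module.Dual F H), α ≠ β →
      ∀ x ∈ rootSpace H α, ∀ y ∈ rootSpace H β, x * y ∈ rootSpace H (α + β) := by
  intro α β hαβ x hx y hy
  let φ : H →ₗ[F] A :=
    ((LinearMap.mul F A).flip (x * y)).comp H.subtype - (α + β).smulRight (x * y)
  have hφ : φ = 0 := by
    refine LinearMap.eq_zero_of_forall_apply_ne_zero (γ := β - α) (sub_ne_zero.mpr hαβ.symm)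
      fun h hh => ?_
    have hne : α h ≠ β h := fun e => hh (by simp [e])
    simpa [φ, sub_eq_zero] using
      mul_mul_eq_add_smul_of_ne hanti hsagle (hHab _ h.2 _ h.2) (hx h) (hy h) hne
  intro h
  simpa [φ, sub_eq_zero] using LinearMap.congr_fun hφ h

/-- In a toral pair `(A, H)` where `A` is anticommutative and satisfies
`J(x,y,xy) = 0` (an extended algebra in the sense of Sagle), the root spaces satisfy
`A^α A^β ⊆ A^(α+β)` for distinct roots. -/
theorem rootSpace_mul_of_ne {F A : Type*} [Field F] [CharZero F]
    [NonUnitalNonAssocRing A] [Module F A] [SMulCommClass F A A] [IsScalarTower F A A]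
    (hanti : ∀ x y : A, x * y = -(y * x))
    (hsagle : ∀ x y : A, jac x y (x * y) = 0)
    (H : Submodule F A) [DecidableEq (Module.Dual F H)] (hHne : H ≠ ⊥)
    (hHab : ∀ h ∈ H, ∀ h' ∈ H, h * h' = 0)
    (hdecomp : DirectSum.IsInternal (fun α : Module.Dual F H => rootSpace H α))
    (h00 : ∀ x ∈ rootSpace H 0, ∀ y ∈ rootSpace H 0,
      x * y ∈ rootSpace H (0 : Module.Dual F H))
    :
    ∀ (α β : Module.Dual F H), α ≠ β →
      ∀ x ∈ rootSpace H α, ∀ y ∈ rootSpace H β, x * y ∈ rootSpace H (α + β) :=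
  rootSpace_mul_of_ne_general hanti hsagle H hHab
end

section
/- Let (A, H) be a toral pair where A is a Malcev algebra over a field of characteristic zero. Then for each α ∈ H* with α ≠ 0, A^α A^α ⊆ A^{2α} + A^{-α}. -/
/-! For `h ∈ H` and `x, y ∈ A^α`, the Malcev identity applied to `J(h, x, y)` shows that `xy` is
annihilated by `(L_h - 2α(h))(L_h + α(h))`. Hence each component `z_β` of `xy` in the root space
decomposition is annihilated by the scalar `(β - 2α)(h) · (β + α)(h)` for every `h ∈ H`. A product
of two linear functionals vanishes identically only if one of them does, so `β ∈ {2α, -α}`. -/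

lemma LinearMap.eq_zero_or_eq_zero_of_forall_mul_eq_zero {R M : Type*} [Ring R]
    [NoZeroDivisors R] [AddCommGroup M] [Module R M] {f g : M →ₗ[R] R}
    (hfg : ∀ v, f v * g v = 0) : f = 0 ∨ g = 0 := by
  have hcover : ((⊤ : Submodule R M) : Set M) ⊆ LinearMap.ker f ∪ LinearMap.ker g :=
    fun v _ ↦ mul_eq_zero.mp (hfg v)
  rcases AddSubgroupClass.subset_union.mp hcover with hf | hg
  · exact Or.inl (LinearMap.ext fun v ↦ hf (Submodule.mem_top (x := v)))
  · exact Or.inr (LinearMap.ext fun v ↦ hg (Submodule.mem_top (x := v)))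

section Malcev

variable {R A : Type*} [CommRing R] [NonUnitalNonAssocRing A] [Module R A]
  [IsScalarTower R A A]

lemma jac_of_mul_eq_smul (hanti : ∀ x y : A, x * y = -(y * x)) {a x y : A} {t : R}
    (hx : a * x = t • x) (hy : a * y = t • y) :
    jac a x y = (2 * t) • (x * y) - a * (x * y) := by
  rw [jac, hx, hanti y a, hy, hanti (x * y) a]
  simp only [smul_mul_assoc, neg_mul]
  rw [hanti y x]
  module

variable [SMulCommClass R A A]

lemma mul_jac_of_mul_eq_smul (hanti : ∀ x y : A, x * y = -(y * x))
    (hmal : ∀ x y z : A, jac x y (x * z) = (jac x y z) * x) {a y : A} {t : R} (x : A)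
    (hy : a * y = t • y) :
    a * jac a x y = -(t • jac a x y) := by
  have hlin : jac a x (t • y) = t • jac a x y := by
    simp only [jac, mul_smul_comm, smul_mul_assoc, smul_add]
  rw [← hlin, ← hy, hmal, hanti]

lemma mul_mul_mul_of_mul_eq_smul (hanti : ∀ x y : A, x * y = -(y * x))
    (hmal : ∀ x y z : A, jac x y (x * z) = (jac x y z) * x) {a x y : A} {t : R}
    (hx : a * x = t • x) (hy : a * y = t • y) :
    a * (a * (x * y)) = t • (a * (x * y)) + (2 * t ^ 2) • (x * y) := by
  have h := mul_jac_of_mul_eq_smul hanti hmal x hy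
  rw [jac_of_mul_eq_smul hanti hx hy, mul_sub, mul_smul_comm] at h
  linear_combination (norm := module) -h

end Malcev

section RootSpace

variable {F A : Type*} [Field F] [NonUnitalNonAssocRing A] [Module F A]
  [SMulCommClass F A A] [IsScalarTower F A A] {H : Submodule F A}

lemma mem_rootSpace_sup_of_forall_mul_mul_eq_zero (hind : iSupIndep (rootSpace H))
    {z : A} (hz : z ∈ ⨆ δ, rootSpace H δ) {β γ : Module.Dual F H}
    (hzβγ : ∀ h : H,
      (h : A) * ((h : A) * z) - (β h + γ h) • ((h : A) * z) + (β h * γ h) • z = 0) :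
    z ∈ rootSpace H β ⊔ rootSpace H γ := by
  obtain ⟨f, hf, rfl⟩ := (Submodule.mem_iSup_iff_exists_finsupp _ _).mp hz
  refine Submodule.sum_mem _ fun δ hδ ↦ ?_
  have hcomp : ∀ h : H, ((δ - β) h * (δ - γ) h) • f δ = 0 := by
    intro h
    have hterm : ∀ ε, ((ε - β) h * (ε - γ) h) • f ε = (h : A) * ((h : A) * f ε)
        - (β h + γ h) • ((h : A) * f ε) + (β h * γ h) • f ε := by
      intro ε
      rw [hf ε h, mul_smul_comm, hf ε h, LinearMap.sub_apply, LinearMap.sub_apply]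
      module
    have hsum : ∑ ε ∈ f.support, ((ε - β) h * (ε - γ) h) • f ε = 0 := by
      have := hzβγ h
      simp only [Finsupp.sum, Finset.mul_sum, Finset.smul_sum, ← Finset.sum_sub_distrib,
        ← Finset.sum_add_distrib] at this
      rw [← this]
      exact Finset.sum_congr rfl fun ε _ ↦ hterm ε
    exact (iSupIndep_iff_finsetSum_eq_zero_imp_eq_zero _).mp hind f.support _
      (fun ε _ ↦ Submodule.smul_mem _ _ (hf ε)) hsum δ hδ
  have hroot : δ - β = 0 ∨ δ - γ = 0 :=
    LinearMap.eq_zero_or_eq_zero_of_forall_mul_eq_zero fun h ↦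
      (smul_eq_zero.mp (hcomp h)).resolve_right (Finsupp.mem_support_iff.mp hδ)
  rcases hroot with hβ | hγ
  · exact Submodule.mem_sup_left (sub_eq_zero.mp hβ ▸ hf δ)
  · exact Submodule.mem_sup_right (sub_eq_zero.mp hγ ▸ hf δ)

end RootSpace

theorem rootSpace_mul_self_general {F A : Type*} [Field F]
    [NonUnitalNonAssocRing A] [Module F A] [SMulCommClass F A A] [IsScalarTower F A A]
    (hanti : ∀ x y : A, x * y = -(y * x))
    (hmal : ∀ x y z : A, jac x y (x * z) = (jac x y z) * x)
    (H : Submodule F A) [DecidableEq (Module.Dual F H)]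
    (hdecomp : DirectSum.IsInternal (fun α : Module.Dual F H => rootSpace H α))
    :
    ∀ (α : Module.Dual F H), α ≠ 0 →
      ∀ x ∈ rootSpace H α, ∀ y ∈ rootSpace H α,
        x * y ∈ rootSpace H ((2 : F) • α) ⊔ rootSpace H (-α) := by
  intro α _ x hx y hy
  refine mem_rootSpace_sup_of_forall_mul_mul_eq_zero hdecomp.submodule_iSupIndep
    (hdecomp.submodule_iSup_eq_top ▸ Submodule.mem_top) fun h ↦ ?_
  rw [mul_mul_mul_of_mul_eq_smul hanti hmal (hx h) (hy h)]
  simp only [LinearMap.smul_apply, LinearMap.neg_apply, smul_eq_mul]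
  module

/-- In a toral pair `(A, H)` where `A` is a Malcev algebra over a field of
characteristic zero, for every nonzero root `α` one has `A^α A^α ⊆ A^(2α) + A^(-α)`. -/
theorem rootSpace_mul_self {F A : Type*} [Field F] [CharZero F]
    [NonUnitalNonAssocRing A] [Module F A] [SMulCommClass F A A] [IsScalarTower F A A]
    (hanti : ∀ x y : A, x * y = -(y * x))
    (hmal : ∀ x y z : A, jac x y (x * z) = (jac x y z) * x)
    (H : Submodule F A) [DecidableEq (Module.Dual F H)] (hHne : H ≠ ⊥)
    (hHab : ∀ h ∈ H, ∀ h' ∈ H, h * h' = 0)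
    (hdecomp : DirectSum.IsInternal (fun α : Module.Dual F H => rootSpace H α))
    (h00 : ∀ x ∈ rootSpace H 0, ∀ y ∈ rootSpace H 0,
      x * y ∈ rootSpace H (0 : Module.Dual F H))
    :
    ∀ (α : Module.Dual F H), α ≠ 0 →
      ∀ x ∈ rootSpace H α, ∀ y ∈ rootSpace H α,
        x * y ∈ rootSpace H ((2 : F) • α) ⊔ rootSpace H (-α) :=
  rootSpace_mul_self_general hanti hmal H hdecomp
end

section
/- Let A be an anticommutative algebra over a field F of characteristic zero with a symmetric invariant bilinear form, G a torsion-free abelian group, and λ: G × G → F^× a symmetric 2-cocycle. Define L(A) = A ⊗ F^t[G] with product (x ⊗ t^σ)(y ⊗ t^τ) = λ(σ,τ) (xy ⊗ t^{σ+τ}). Then L(A) is anticommutative, and if A is a Malcev algebra, then L(A) is a Malcev algebra. -/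
/-!
Since `λ` is symmetric, anticommutativity of `A` passes to `L(A)`. For the Sagle identity,
both sides are additive in each argument, so it suffices to check it on homogeneous elements
`x ⊗ t^σ, y ⊗ t^τ, z ⊗ t^ρ, w ⊗ t^π`. There every term is a product in `A` placed in degree
`σ + τ + ρ + π`, and the cocycle and symmetry conditions show that the scalar
`λ(σ,τ) λ(σ+τ,ρ) λ(σ+τ+ρ,π)` does not depend on the order of `σ, τ, ρ, π`, nor on how the
product is bracketed. So the identity in `L(A)` is the Sagle identity of `A` times this scalar.
-/

/-- The loop algebra product on `L(A) = A ⊗ F^t[G] ≅ (G →₀ A)`: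
`(x ⊗ t^σ)(y ⊗ t^τ) = λ(σ,τ) (xy ⊗ t^{σ+τ})`. -/
noncomputable def conv {F G A : Type*} [Field F] [AddCommGroup G]
    [NonUnitalNonAssocRing A] [Module F A]
    (l : G → G → F) (f g : G →₀ A) : G →₀ A :=
  f.sum fun σ x => g.sum fun τ y => Finsupp.single (σ + τ) (l σ τ • (x * y))

open Finsupp

structure IsSymmTwoCocycle {G M : Type*} [AddCommMonoid G] [Semigroup M] (l : G → G → M) :
    Prop where
  symm : ∀ σ τ, l σ τ = l τ σ
  cocycle : ∀ σ τ ρ, l σ τ * l (σ + τ) ρ = l τ ρ * l σ (τ + ρ)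

def SatisfiesSagle {M : Type*} [Add M] (mul : M → M → M) : Prop :=
  ∀ x y z t, mul (mul (mul x y) z) t + mul (mul (mul t x) y) z + mul (mul (mul z t) x) y
      + mul (mul (mul y z) t) x = mul (mul x z) (mul y t)

namespace IsSymmTwoCocycle

variable {G M : Type*} [AddCommMonoid G] [Semigroup M] {l : G → G → M}

theorem swap_right (hl : IsSymmTwoCocycle l) (σ τ ρ : G) :
    l σ τ * l (σ + τ) ρ = l σ ρ * l (σ + ρ) τ := by
  rw [hl.cocycle, hl.cocycle σ ρ τ, hl.symm ρ τ, add_comm ρ τ]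

theorem swap_left (hl : IsSymmTwoCocycle l) (σ τ ρ : G) :
    l σ τ * l (σ + τ) ρ = l τ σ * l (τ + σ) ρ := by
  rw [hl.symm σ τ, add_comm σ τ]

theorem rotate (hl : IsSymmTwoCocycle l) (σ τ ρ π : G) :
    l π σ * l (π + σ) τ * l (π + σ + τ) ρ = l σ τ * l (σ + τ) ρ * l (σ + τ + ρ) π :=
  calc l π σ * l (π + σ) τ * l (π + σ + τ) ρ
      = l σ π * l (σ + π) τ * l (σ + π + τ) ρ := by
        rw [hl.swap_left π σ τ, add_comm π σ]
    _ = l σ τ * l (σ + τ) π * l (σ + τ + π) ρ := by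
        rw [hl.swap_right σ π τ, add_right_comm σ π τ]
    _ = l σ τ * l (σ + τ) ρ * l (σ + τ + ρ) π := by
        rw [mul_assoc, hl.swap_right (σ + τ) π ρ, ← mul_assoc]

theorem pair (hl : IsSymmTwoCocycle l) (σ τ ρ π : G) :
    l σ ρ * l τ π * l (σ + ρ) (τ + π) = l σ τ * l (σ + τ) ρ * l (σ + τ + ρ) π := by
  rw [mul_assoc, ← hl.cocycle (σ + ρ) τ π, ← mul_assoc, hl.swap_right σ ρ τ,
    add_right_comm σ ρ τ]

end IsSymmTwoCocycle

section LoopAlgebra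

variable {F G A : Type*} [Field F] [AddCommGroup G] [NonUnitalNonAssocRing A] [Module F A]
  (l : G → G → F)

@[simp]
theorem conv_zero_left (g : G →₀ A) : conv l 0 g = 0 := by simp [conv]

@[simp]
theorem conv_zero_right (f : G →₀ A) : conv l f 0 = 0 := by simp [conv]

theorem conv_add_left (f₁ f₂ g : G →₀ A) :
    conv l (f₁ + f₂) g = conv l f₁ g + conv l f₂ g := by
  refine sum_add_index' (fun _ => by simp) fun σ x₁ x₂ => ?_
  simp [add_mul, smul_add, single_add, sum_add]

theorem conv_add_right (f g₁ g₂ : G →₀ A) :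
    conv l f (g₁ + g₂) = conv l f g₁ + conv l f g₂ := by
  refine (sum_congr fun σ _ => sum_add_index' (fun _ => by simp) fun τ y₁ y₂ => ?_).trans
    sum_add
  simp [mul_add, smul_add, single_add]

@[simp]
theorem conv_single_single (σ τ : G) (x y : A) :
    conv l (single σ x) (single τ y) = single (σ + τ) (l σ τ • (x * y)) := by
  simp [conv]

theorem conv_anticomm (hA : ∀ x y : A, x * y = -(y * x)) (hl : ∀ σ τ : G, l σ τ = l τ σ)
    (f g : G →₀ A) : conv l f g = -conv l g f := by
  induction f using Finsupp.induction_linear with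
  | zero => simp
  | add f₁ f₂ h₁ h₂ => rw [conv_add_left, conv_add_right, h₁, h₂, neg_add]
  | single σ x =>
    induction g using Finsupp.induction_linear with
    | zero => simp
    | add g₁ g₂ h₁ h₂ => rw [conv_add_left, conv_add_right, h₁, h₂, neg_add]
    | single τ y => simp [hA x y, hl σ τ, add_comm σ τ]

variable [IsScalarTower F A A]

theorem conv_conv_conv_single (σ τ ρ π : G) (x y z t : A) :
    conv l (conv l (conv l (single σ x) (single τ y)) (single ρ z)) (single π t) =
      single (σ + τ + ρ + π) ((l σ τ * l (σ + τ) ρ * l (σ + τ + ρ) π) • (x * y * z * t)) := by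
  simp only [conv_single_single, smul_mul_assoc, smul_smul, mul_comm]

variable [SMulCommClass F A A]

theorem conv_conv_single_conv_single (σ τ ρ π : G) (x y z t : A) :
    conv l (conv l (single σ x) (single ρ z)) (conv l (single τ y) (single π t)) =
      single (σ + ρ + (τ + π)) ((l σ ρ * l τ π * l (σ + ρ) (τ + π)) • (x * z * (y * t))) := by
  simp only [conv_single_single, smul_mul_assoc, mul_smul_comm, smul_smul, mul_comm]

variable {l} in
theorem conv_satisfiesSagle_single (hl : IsSymmTwoCocycle l)
    (hA : SatisfiesSagle (M := A) (· * ·)) (σ τ ρ π : G) (x y z t : A) :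
    conv l (conv l (conv l (single σ x) (single τ y)) (single ρ z)) (single π t)
      + conv l (conv l (conv l (single π t) (single σ x)) (single τ y)) (single ρ z)
      + conv l (conv l (conv l (single ρ z) (single π t)) (single σ x)) (single τ y)
      + conv l (conv l (conv l (single τ y) (single ρ z)) (single π t)) (single σ x)
      = conv l (conv l (single σ x) (single ρ z)) (conv l (single τ y) (single π t)) := by
  have h₁ := hl.rotate σ τ ρ π
  have h₂ := (hl.rotate π σ τ ρ).trans h₁
  have h₃ := (hl.rotate ρ π σ τ).trans h₂
  simp only [conv_conv_conv_single, conv_conv_single_conv_single, h₁, h₂, h₃, hl.pair]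
  rw [show π + σ + τ + ρ = σ + τ + ρ + π by abel, show ρ + π + σ + τ = σ + τ + ρ + π by abel,
    show τ + ρ + π + σ = σ + τ + ρ + π by abel, show σ + ρ + (τ + π) = σ + τ + ρ + π by abel]
  simp only [← single_add, ← smul_add, hA x y z t]

variable {l} in
theorem conv_satisfiesSagle (hl : IsSymmTwoCocycle l) (hA : SatisfiesSagle (M := A) (· * ·)) :
    SatisfiesSagle (conv (A := A) l) := by
  intro f g h k
  induction f using Finsupp.induction_linear with
  | zero => simp
  | add f₁ f₂ ih₁ ih₂ => simp only [conv_add_left, conv_add_right, ← ih₁, ← ih₂]; abel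
  | single σ x =>
    induction g using Finsupp.induction_linear with
    | zero => simp
    | add g₁ g₂ ih₁ ih₂ => simp only [conv_add_left, conv_add_right, ← ih₁, ← ih₂]; abel
    | single τ y =>
      induction h using Finsupp.induction_linear with
      | zero => simp
      | add h₁ h₂ ih₁ ih₂ => simp only [conv_add_left, conv_add_right, ← ih₁, ← ih₂]; abel
      | single ρ z =>
        induction k using Finsupp.induction_linear with
        | zero => simp
        | add k₁ k₂ ih₁ ih₂ => simp only [conv_add_left, conv_add_right, ← ih₁, ← ih₂]; abel
        | single π t => exact conv_satisfiesSagle_single hl hA σ τ ρ π x y z t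

end LoopAlgebra

theorem loop_algebra_malcev_general {F G A : Type*} [Field F] [AddCommGroup G]
    [NonUnitalNonAssocRing A] [Module F A] [SMulCommClass F A A] [IsScalarTower F A A]
    (hanti : ∀ x y : A, x * y = -(y * x))
    (l : G → G → F)
    (hlsymm : ∀ σ τ : G, l σ τ = l τ σ)
    (hlcoc : ∀ σ τ ρ : G, l σ τ * l (σ + τ) ρ = l τ ρ * l σ (τ + ρ)) :
    (∀ f g : G →₀ A, conv l f g = -(conv l g f)) ∧
    ((∀ x y z t : A,
        ((x * y) * z) * t + ((t * x) * y) * z + ((z * t) * x) * y + ((y * z) * t) * x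
          = (x * z) * (y * t)) →
      ∀ f g h k : G →₀ A,
        conv l (conv l (conv l f g) h) k + conv l (conv l (conv l k f) g) h
          + conv l (conv l (conv l h k) f) g + conv l (conv l (conv l g h) k) f
          = conv l (conv l f h) (conv l g k)) :=
  ⟨conv_anticomm l hanti hlsymm, conv_satisfiesSagle ⟨hlsymm, hlcoc⟩⟩

/-- If `A` is anticommutative with a symmetric invariant bilinear form,
`G` is a torsion-free abelian group and `λ` a symmetric 2-cocycle with values in `Fˣ`,
then the loop algebra `L(A) = A ⊗ F^t[G]` is anticommutative, and it satisfies the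
Sagle identity (i.e. is a Malcev algebra) whenever `A` does. -/
theorem loop_algebra_malcev {F G A : Type*} [Field F] [CharZero F] [AddCommGroup G]
    [NoZeroSMulDivisors ℤ G]
    [NonUnitalNonAssocRing A] [Module F A] [SMulCommClass F A A] [IsScalarTower F A A]
    (hanti : ∀ x y : A, x * y = -(y * x))
    (B : A →ₗ[F] A →ₗ[F] F)
    (hsymm : ∀ x y : A, B x y = B y x)
    (hinv : ∀ x y z : A, B (x * y) z = B x (y * z))
    (l : G → G → F) (hl : ∀ σ τ : G, l σ τ ≠ 0) (hl0 : l 0 0 = 1)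
    (hlsymm : ∀ σ τ : G, l σ τ = l τ σ)
    (hlcoc : ∀ σ τ ρ : G, l σ τ * l (σ + τ) ρ = l τ ρ * l σ (τ + ρ)) :
    (∀ f g : G →₀ A, conv l f g = -(conv l g f)) ∧
    ((∀ x y z t : A,
        ((x * y) * z) * t + ((t * x) * y) * z + ((z * t) * x) * y + ((y * z) * t) * x
          = (x * z) * (y * t)) →
      ∀ f g h k : G →₀ A,
        conv l (conv l (conv l f g) h) k + conv l (conv l (conv l k f) g) h
          + conv l (conv l (conv l h k) f) g + conv l (conv l (conv l g h) k) f
          = conv l (conv l f h) (conv l g k)) :=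
  loop_algebra_malcev_general hanti l hlsymm hlcoc
end

section
/- Let A be an anticommutative algebra over a field of characteristic zero. If A satisfies the Malcev identity, then J(x, y, xy) = 0 for all x, y ∈ A; that is, every Malcev algebra is an extended algebra in the sense of Sagle. -/
section Anticomm

variable {A : Type*} [NonUnitalNonAssocRing A]

theorem mul_self_eq_zero_of_anticomm [IsAddTorsionFree A] (hanti : ∀ x y : A, x * y = -(y * x))
    (x : A) : x * x = 0 :=
  self_eq_neg.mp (hanti x x)

theorem jac_self_right_eq (hanti : ∀ x y : A, x * y = -(y * x)) (x y : A) :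
    jac y x x = (x * x) * y := by
  rw [jac, ← add_mul, hanti y x, neg_add_cancel, zero_mul, zero_add]

theorem jac_mul_self_symm (hanti : ∀ x y : A, x * y = -(y * x)) (x y : A) :
    jac x y (x * y) = jac y x (y * x) := by
  simp only [jac, hanti y x, neg_mul, mul_neg, neg_neg, hanti (x * y) y, hanti x (x * y)]
  abel

end Anticomm

theorem malcev_is_sagle_extended_general {F A : Type*} [Field F] [CharZero F]
    [NonUnitalNonAssocRing A] [Module F A]
    (hanti : ∀ x y : A, x * y = -(y * x))
    (hmal : ∀ x y z : A, jac x y (x * z) = (jac x y z) * x) :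
    ∀ x y : A, jac x y (x * y) = 0 := by
  have : IsAddTorsionFree A := .of_isTorsionFree F A
  intro x y
  rw [jac_mul_self_symm hanti, hmal, jac_self_right_eq hanti,
    mul_self_eq_zero_of_anticomm hanti, zero_mul, zero_mul]

/-- Every Malcev algebra over a field of characteristic zero satisfies
`J(x, y, xy) = 0`, i.e. it is an extended algebra in the sense of Sagle. -/
theorem malcev_is_sagle_extended {F A : Type*} [Field F] [CharZero F]
    [NonUnitalNonAssocRing A] [Module F A] [SMulCommClass F A A] [IsScalarTower F A A]
    (hanti : ∀ x y : A, x * y = -(y * x))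
    (hmal : ∀ x y z : A, jac x y (x * z) = (jac x y z) * x) :
    ∀ x y : A, jac x y (x * y) = 0 :=
  malcev_is_sagle_extended_general (F := F) hanti hmal
end
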